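/- arXiv:2001.07383 — 6 statements merged into one kernel-verified Lean document; each statement's English description precedes it below -/
import Mathlib

section
/- Let q ≥ 1 be an integer and α ∈ ℝ with α ≠ 1. Then the system of linear equations ∑_{j=1}^{q} K(j) = (1−α)/2, ∑_{j=1}^{q} j² K(j) = 0, ∑_{j=1}^{q} j⁴ K(j) = 0, …, ∑_{j=1}^{q} j^{2(q−1)} K(j) = 0 in the unknowns K(1), …, K(q) ∈ ℝ has the unique solution K(j) = ((1−α)/2) · (q!/j)² · 1/∏_{l=1, l≠j}^{q} (l² − j²) for j = 1, …, q. -/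
/-!
The system says that the moments `∑ⱼ (j²)ʳ K j`, `r < q`, equal `c · 0ʳ`, where
`c = (1 - α)/2`. For distinct nodes `vⱼ`, the weights `c · ℓⱼ(x)` given by the Lagrange basis
at `x` reproduce `c · xʳ` on every polynomial of degree `< q`, since such a polynomial is its
own interpolant. The Vandermonde system is uniquely solvable, because pairing a solution of the
homogeneous system with the coefficients of `ℓᵢ` isolates its `i`-th entry. At `x = 0` with
nodes `j²`, `ℓⱼ(0) = ∏_{l ≠ j} l² / (l² - j²) = (q!/j)² / ∏_{l ≠ j} (l² - j²)`.
-/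

open Finset Polynomial

namespace Lagrange

variable {F ι : Type*} [Field F] [DecidableEq ι] {s : Finset ι} {v : ι → F}

theorem eval_basis (x : F) (i : ι) :
    (Lagrange.basis s v i).eval x = ∏ j ∈ s.erase i, (x - v j) / (v i - v j) := by
  simp only [Lagrange.basis, eval_prod, basisDivisor, eval_mul, eval_C, eval_sub, eval_X,
    div_eq_inv_mul]

theorem sum_eval_mul_eval_basis (hvs : Set.InjOn v s) {p : F[X]} (hp : p.degree < #s) (x : F) :
    ∑ i ∈ s, p.eval (v i) * (Lagrange.basis s v i).eval x = p.eval x := by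
  conv_rhs => rw [eq_interpolate hvs hp]
  simp only [interpolate_apply, eval_finsetSum, eval_mul, eval_C]

theorem sum_pow_mul_eval_basis (hvs : Set.InjOn v s) {r : ℕ} (hr : r < #s) (x : F) :
    ∑ i ∈ s, v i ^ r * (Lagrange.basis s v i).eval x = x ^ r := by
  simpa using sum_eval_mul_eval_basis hvs (p := X ^ r) (by simpa using hr) x

theorem eq_zero_of_sum_pow_mul_eq_zero (hvs : Set.InjOn v s) {D : ι → F}
    (hD : ∀ r < #s, ∑ j ∈ s, v j ^ r * D j = 0) : ∀ i ∈ s, D i = 0 := by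
  intro i hi
  set ℓ := Lagrange.basis s v i
  have hℓ : ℓ.natDegree < #s := by
    rw [natDegree_basis hvs hi]
    exact Nat.sub_one_lt (card_ne_zero_of_mem hi)
  calc D i = ∑ j ∈ s, ℓ.eval (v j) * D j := by
        rw [sum_eq_single_of_mem i hi fun j hj hji => by
            rw [eval_basis_of_ne hji.symm hj, zero_mul], eval_basis_self hvs hi, one_mul]
    _ = ∑ j ∈ s, ∑ r ∈ range #s, ℓ.coeff r * (v j ^ r * D j) := by
        simp only [eval_eq_sum_range' hℓ, sum_mul, mul_assoc]
    _ = ∑ r ∈ range #s, ℓ.coeff r * ∑ j ∈ s, v j ^ r * D j := by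
        rw [sum_comm]; simp only [mul_sum]
    _ = 0 := sum_eq_zero fun r hr => by rw [hD r (mem_range.mp hr), mul_zero]

theorem sum_pow_mul_eq_mul_pow_iff (hvs : Set.InjOn v s) (c x : F) (K : ι → F) :
    (∀ r < #s, ∑ j ∈ s, v j ^ r * K j = c * x ^ r) ↔
      ∀ i ∈ s, K i = c * (Lagrange.basis s v i).eval x := by
  have hsol : ∀ r < #s, ∑ j ∈ s, v j ^ r * (c * (Lagrange.basis s v j).eval x) = c * x ^ r :=
    fun r hr => by simp only [mul_left_comm _ c, ← mul_sum, sum_pow_mul_eval_basis hvs hr]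
  constructor
  · intro hK i hi
    have hdiff := eq_zero_of_sum_pow_mul_eq_zero hvs
      (D := fun j => K j - c * (Lagrange.basis s v j).eval x)
      fun r hr => by simp only [mul_sub, sum_sub_distrib, hK r hr, hsol r hr, sub_self]
    exact sub_eq_zero.mp (hdiff i hi)
  · intro hK r hr
    rw [← hsol r hr]
    exact sum_congr rfl fun j hj => by rw [hK j hj]

end Lagrange

theorem prod_Icc_erase_natCast {F : Type*} [Field F] [CharZero F] {q j : ℕ}
    (hj : j ∈ Icc 1 q) :
    ∏ l ∈ (Icc 1 q).erase j, (l : F) = q.factorial / j := by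
  have hj0 : (j : F) ≠ 0 := Nat.cast_ne_zero.mpr (by grind)
  rw [eq_div_iff hj0, mul_comm, mul_prod_erase _ (fun l : ℕ => (l : F)) hj, ← Nat.cast_prod,
    ← Ico_add_one_right_eq_Icc, prod_Ico_id_eq_factorial]

theorem eval_zero_basis_Icc_sq {q j : ℕ} (hj : j ∈ Icc 1 q) :
    (Lagrange.basis (Icc 1 q) (fun n : ℕ => (n : ℝ) ^ 2) j).eval 0 =
      ((q.factorial : ℝ) / j) ^ 2 *
        (∏ l ∈ (Icc 1 q).erase j, ((l : ℝ) ^ 2 - (j : ℝ) ^ 2))⁻¹ := by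
  rw [Lagrange.eval_basis, ← prod_Icc_erase_natCast hj, ← prod_pow, ← prod_inv_distrib,
    ← prod_mul_distrib]
  refine prod_congr rfl fun l _ => ?_
  rw [zero_sub, ← neg_sub, neg_div_neg_eq, div_eq_mul_inv]

theorem statement2_general (q : ℕ) (hq : 1 ≤ q) (α : ℝ) (K : ℕ → ℝ) :
    ((∑ j ∈ Finset.Icc 1 q, K j) = (1 - α) / 2 ∧
      (∀ r : ℕ, 1 ≤ r → r ≤ q - 1 →
        (∑ j ∈ Finset.Icc 1 q, (j : ℝ) ^ (2 * r) * K j) = 0))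
    ↔
    (∀ j ∈ Finset.Icc 1 q,
      K j = ((1 - α) / 2) * ((q.factorial : ℝ) / j) ^ 2 *
        (∏ l ∈ (Finset.Icc 1 q).erase j, ((l : ℝ) ^ 2 - (j : ℝ) ^ 2))⁻¹) := by
  have hvs : Set.InjOn (fun n : ℕ => (n : ℝ) ^ 2) (Icc 1 q) := fun a _ b _ h =>
    Nat.pow_left_injective two_ne_zero (by simpa using h)
  have hsystem : ((∑ j ∈ Icc 1 q, K j) = (1 - α) / 2 ∧
      ∀ r : ℕ, 1 ≤ r → r ≤ q - 1 →
        (∑ j ∈ Icc 1 q, (j : ℝ) ^ (2 * r) * K j) = 0) ↔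
      ∀ r < #(Icc 1 q),
        ∑ j ∈ Icc 1 q, ((j : ℝ) ^ 2) ^ r * K j = (1 - α) / 2 * 0 ^ r := by
    simp only [Nat.card_Icc, add_tsub_cancel_right, ← pow_mul]
    constructor
    · rintro ⟨hsum, hpow⟩ (_ | r) hr
      · simpa using hsum
      · simpa using hpow (r + 1) (by omega) (by omega)
    · intro h
      refine ⟨by simpa using h 0 hq, fun r hr₁ hr₂ => ?_⟩
      simpa [zero_pow (by omega : r ≠ 0)] using h r (by omega)
  rw [hsystem, Lagrange.sum_pow_mul_eq_mul_pow_iff hvs]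
  refine forall₂_congr fun j hj => ?_
  rw [eval_zero_basis_Icc_sq hj, mul_assoc]

/-- For `q ≥ 1` and `α ≠ 1`, the linear system
`∑_{j=1}^q K j = (1−α)/2`, `∑_{j=1}^q j^(2r) K j = 0` for `r = 1, …, q−1`,
has the unique solution
`K j = ((1−α)/2) (q!/j)² / ∏_{l≠j} (l² − j²)` for `j = 1, …, q`. -/
theorem statement2 (q : ℕ) (hq : 1 ≤ q) (α : ℝ) (hα : α ≠ 1) (K : ℕ → ℝ) :
    ((∑ j ∈ Finset.Icc 1 q, K j) = (1 - α) / 2 ∧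
      (∀ r : ℕ, 1 ≤ r → r ≤ q - 1 →
        (∑ j ∈ Finset.Icc 1 q, (j : ℝ) ^ (2 * r) * K j) = 0))
    ↔
    (∀ j ∈ Finset.Icc 1 q,
      K j = ((1 - α) / 2) * ((q.factorial : ℝ) / j) ^ 2 *
        (∏ l ∈ (Finset.Icc 1 q).erase j, ((l : ℝ) ^ 2 - (j : ℝ) ^ 2))⁻¹) :=
  statement2_general q hq α K
end

section
/- For every integer q ≥ 1, the identity ∑_{j=1}^{q} (q!/j)² · 1/∏_{l=1, l≠j}^{q} (l² − j²) = 1 holds. -/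
open Finset Polynomial

/-! Since the Lagrange basis polynomials of the nodes `l²` sum to `1`, evaluating that sum at `0` gives
`∑ⱼ ∏_{l ≠ j} l² / (l² − j²) = 1`, and `∏_{l ≠ j} l² = (q!/j)²`. -/

variable {F ι : Type*} [Field F] [DecidableEq ι]

theorem Lagrange.sum_prod_erase_div_sub_eq_one {s : Finset ι} {v : ι → F}
    (hvs : Set.InjOn v s) (hs : s.Nonempty) :
    ∑ j ∈ s, ∏ l ∈ s.erase j, v l / (v l - v j) = 1 := by
  have h := congrArg (eval 0) (Lagrange.sum_basis hvs hs)
  rw [eval_finsetSum, eval_one] at h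
  rw [← h]
  refine sum_congr rfl fun j _ => ?_
  rw [Lagrange.basis, eval_prod]
  refine prod_congr rfl fun l _ => ?_
  rw [Lagrange.basisDivisor, eval_mul, eval_C, eval_sub, eval_X, eval_C,
    div_eq_mul_inv, ← neg_sub, inv_neg]
  ring

theorem Lagrange.sum_prod_div_mul_inv_prod_erase_sub_eq_one {s : Finset ι} {v : ι → F}
    (hvs : Set.InjOn v s) (hs : s.Nonempty) (hv : ∀ j ∈ s, v j ≠ 0) :
    ∑ j ∈ s, (∏ l ∈ s, v l) / v j * (∏ l ∈ s.erase j, (v l - v j))⁻¹ = 1 := by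
  rw [← Lagrange.sum_prod_erase_div_sub_eq_one hvs hs]
  refine sum_congr rfl fun j hj => ?_
  rw [prod_div_distrib, ← mul_prod_erase s v hj, mul_div_cancel_left₀ _ (hv j hj), div_eq_mul_inv]

/-- For every integer `q ≥ 1`,
`∑_{j=1}^q (q!/j)² · 1/∏_{l=1, l≠j}^q (l² − j²) = 1`. -/
theorem statement3 (q : ℕ) (hq : 1 ≤ q) :
    (∑ j ∈ Finset.Icc 1 q, ((q.factorial : ℝ) / j) ^ 2 *
      (∏ l ∈ (Finset.Icc 1 q).erase j, ((l : ℝ) ^ 2 - (j : ℝ) ^ 2))⁻¹) = 1 := by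
  have hprod : ∏ l ∈ Icc 1 q, (l : ℝ) ^ 2 = (q.factorial : ℝ) ^ 2 := by
    rw [prod_pow, ← Nat.cast_prod, ← Finset.Ico_add_one_right_eq_Icc, prod_Ico_id_eq_factorial]
  have hinj : Set.InjOn (fun l : ℕ => (l : ℝ) ^ 2) (Icc 1 q) := fun a _ b _ hab => by
    simpa using hab
  have key := Lagrange.sum_prod_div_mul_inv_prod_erase_sub_eq_one hinj
    ⟨1, by simp [hq]⟩ fun j hj => by have := (mem_Icc.1 hj).1; positivity
  simpa only [hprod, div_pow] using key
end

section
/- For every integer q ≥ 2 and every integer r with 1 ≤ r ≤ q−1, the identity ∑_{j=1}^{q} j^{2r} · (q!/j)² · 1/∏_{l=1, l≠j}^{q} (l² − j²) = 0 holds. -/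
/-!
With nodes `v j = -j²` one has `v l - v j = l² - j²`, and the `j`-th summand is
`P(v j) / ∏_{l ≠ j} (v j - v l)` for `P = (q!)² (-X)^(r-1)`. The sum is therefore the coefficient
of `X^(q-1)` in the Lagrange interpolant of `P` on the `q` nodes, i.e. in `P` itself, which is zero
because `deg P = r - 1 < q - 1`.
-/

open Finset Polynomial

theorem Lagrange.sum_eval_div_prod_sub_eq_zero {F ι : Type*} [Field F] [DecidableEq ι]
    {s : Finset ι} {v : ι → F} (hvs : Set.InjOn v s) {P : F[X]} (hP : P.degree < ↑(#s - 1)) :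
    ∑ i ∈ s, P.eval (v i) / ∏ j ∈ s.erase i, (v i - v j) = 0 := by
  have hP' : P.degree < #s := hP.trans_le (by exact_mod_cast Nat.sub_le _ _)
  rw [← Lagrange.coeff_eq_sum hvs hP', coeff_eq_zero_of_degree_lt hP]

theorem statement4_general (q : ℕ) (r : ℕ) (hr1 : 1 ≤ r) (hr2 : r ≤ q - 1) :
    (∑ j ∈ Finset.Icc 1 q, (j : ℝ) ^ (2 * r) * ((q.factorial : ℝ) / j) ^ 2 *
      (∏ l ∈ (Finset.Icc 1 q).erase j, ((l : ℝ) ^ 2 - (j : ℝ) ^ 2))⁻¹) = 0 := by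
  have hinj : Set.InjOn (fun n : ℕ => -(n : ℝ) ^ 2) (Icc 1 q) := fun a _ b _ h => by
    simpa using h
  have hdeg : (C ((q.factorial : ℝ) ^ 2) * (-X) ^ (r - 1)).degree < ↑(#(Icc 1 q) - 1) := by
    rw [neg_pow, ← C_1, ← C_neg, ← C_pow, ← mul_assoc, ← C_mul]
    refine (degree_C_mul_X_pow_le _ _).trans_lt ?_
    simp only [Nat.card_Icc, add_tsub_cancel_right]
    exact_mod_cast (by omega : r - 1 < q - 1)
  rw [← Lagrange.sum_eval_div_prod_sub_eq_zero hinj hdeg]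
  refine sum_congr rfl fun j hj => ?_
  have hj : (j : ℝ) ≠ 0 := by have := (mem_Icc.mp hj).1; positivity
  obtain ⟨k, rfl⟩ : ∃ k, r = k + 1 := ⟨r - 1, by omega⟩
  simp only [eval_mul, eval_C, eval_pow, eval_neg, eval_X, neg_neg, sub_neg_eq_add,
    neg_add_eq_sub, add_tsub_cancel_right, div_eq_mul_inv]
  field_simp
  ring

/-- For every integer `q ≥ 2` and every `1 ≤ r ≤ q − 1`,
`∑_{j=1}^q j^(2r) (q!/j)² · 1/∏_{l=1, l≠j}^q (l² − j²) = 0`. -/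
theorem statement4 (q : ℕ) (hq : 2 ≤ q) (r : ℕ) (hr1 : 1 ≤ r) (hr2 : r ≤ q - 1) :
    (∑ j ∈ Finset.Icc 1 q, (j : ℝ) ^ (2 * r) * ((q.factorial : ℝ) / j) ^ 2 *
      (∏ l ∈ (Finset.Icc 1 q).erase j, ((l : ℝ) ^ 2 - (j : ℝ) ^ 2))⁻¹) = 0 :=
  statement4_general q r hr1 hr2
end

section
/- Let q ≥ 1 be an integer, α ∈ ℝ, and define K(0) = α, K(j) = K(−j) = ((1−α)/2) · (q!/j)² · 1/∏_{l=1, l≠j}^{q} (l² − j²) for j = 1, …, q. Then ∑_{j=−q}^{q} j^{2q} K(j) = (1−α) · (q!)² · (−1)^{q+1}; in particular, this sum is nonzero whenever α ≠ 1. -/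
/-!
The summand `j ^ (2q) K j` is even in `j` and vanishes at `j = 0`, so the sum is twice the sum
over `j = 1, …, q`. There, after flipping the sign of the `q - 1` factors of the product, the
summand is `(1 - α)/2 · (q!)² (-1)^(q+1) · x_j^(q-1) / ∏_{l ≠ j} (x_j - x_l)` with nodes
`x_j = j²`, and summing `x_j^(q-1) / ∏_{l ≠ j} (x_j - x_l)` over `q` distinct nodes gives the
leading coefficient of the Lagrange interpolant of `X^(q-1)`, which is `1`.
-/

open Finset Polynomial

theorem Lagrange.sum_pow_card_sub_one_div_prod_sub {F ι : Type*} [Field F] [DecidableEq ι]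
    {s : Finset ι} {v : ι → F} (hvs : Set.InjOn v s) (hs : s.Nonempty) :
    ∑ i ∈ s, v i ^ (#s - 1) / ∏ j ∈ s.erase i, (v i - v j) = 1 := by
  have hdeg : ((X : F[X]) ^ (#s - 1)).degree < #s := by
    rw [degree_X_pow]
    exact_mod_cast Nat.sub_lt hs.card_pos one_pos
  simpa using (Lagrange.coeff_eq_sum hvs hdeg).symm

theorem Function.Even.sum_Icc_neg_self {M : Type*} [AddCommMonoid M] {f : ℤ → M}
    (hf : f.Even) (n : ℕ) :
    ∑ j ∈ Icc (-(n : ℤ)) n, f j = f 0 + 2 • ∑ j ∈ Icc 1 n, f j := by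
  induction n with
  | zero => simp
  | succ n ih =>
    have hIcc : Icc (-((n + 1 : ℕ) : ℤ)) (n + 1 : ℕ)
        = insert (-((n + 1 : ℕ) : ℤ)) (insert ((n + 1 : ℕ) : ℤ) (Icc (-(n : ℤ)) n)) := by
      ext x; simp only [mem_Icc, mem_insert]; omega
    rw [hIcc, sum_insert (by simp; omega), sum_insert (by simp), ih, sum_Icc_succ_top (by omega),
      hf, smul_add, two_nsmul (f _)]
    abel

theorem pow_mul_factorial_div_sq_mul_prod_sq_sub_inv {q j : ℕ} (hj : j ∈ Icc 1 q) (c : ℝ) :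
    (j : ℝ) ^ (2 * q) * (c * ((q.factorial : ℝ) / j) ^ 2 *
        (∏ l ∈ (Icc 1 q).erase j, ((l : ℝ) ^ 2 - (j : ℝ) ^ 2))⁻¹)
      = c * (q.factorial : ℝ) ^ 2 * (-1) ^ (q + 1) *
        (((j : ℝ) ^ 2) ^ (#(Icc 1 q) - 1) /
          ∏ l ∈ (Icc 1 q).erase j, ((j : ℝ) ^ 2 - (l : ℝ) ^ 2)) := by
  obtain ⟨hj1, hjq⟩ := mem_Icc.mp hj
  have hcard : #((Icc 1 q).erase j) = q - 1 := by simp [card_erase_of_mem hj]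
  have hprod : ∏ l ∈ (Icc 1 q).erase j, ((l : ℝ) ^ 2 - (j : ℝ) ^ 2)
      = (-1) ^ (q - 1) * ∏ l ∈ (Icc 1 q).erase j, ((j : ℝ) ^ 2 - (l : ℝ) ^ 2) := by
    rw [← hcard, ← prod_neg]
    simp only [neg_sub]
  have hsign : (-1 : ℝ) ^ (q + 1) = (-1) ^ (q - 1) := by
    rw [show q + 1 = q - 1 + 2 by omega, pow_add, neg_one_sq, mul_one]
  have hpow : (j : ℝ) ^ (2 * q) = (j : ℝ) ^ 2 * ((j : ℝ) ^ 2) ^ (q - 1) := by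
    rw [← pow_mul, ← pow_add]
    congr 1
    omega
  have hj0 : (j : ℝ) ≠ 0 := by positivity
  rw [hprod, hpow, hsign, Nat.card_Icc, Nat.add_sub_cancel, mul_inv, ← inv_pow, inv_neg_one]
  field_simp

theorem statement5_general (q : ℕ) (hq : 1 ≤ q) (α : ℝ) (K : ℤ → ℝ)
    (hKsymm : ∀ j : ℤ, K (-j) = K j)
    (hKj : ∀ j : ℕ, 1 ≤ j → j ≤ q →
      K (j : ℤ) = ((1 - α) / 2) * ((q.factorial : ℝ) / j) ^ 2 *
        (∏ l ∈ (Finset.Icc 1 q).erase j, ((l : ℝ) ^ 2 - (j : ℝ) ^ 2))⁻¹) :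
    (∑ j ∈ Finset.Icc (-(q : ℤ)) (q : ℤ), (j : ℝ) ^ (2 * q) * K j)
      = (1 - α) * (q.factorial : ℝ) ^ 2 * (-1 : ℝ) ^ (q + 1) ∧
    (α ≠ 1 → (∑ j ∈ Finset.Icc (-(q : ℤ)) (q : ℤ), (j : ℝ) ^ (2 * q) * K j) ≠ 0) := by
  have heven : Function.Even fun j : ℤ => (j : ℝ) ^ (2 * q) * K j := fun j => by
    simp only [hKsymm, Int.cast_neg, (even_two_mul q).neg_pow]
  have hsq_inj : Set.InjOn (fun l : ℕ => (l : ℝ) ^ 2) (Icc 1 q) := fun a _ b _ hab => by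
    simpa using hab
  have hsum : ∑ j ∈ Icc (-(q : ℤ)) q, (j : ℝ) ^ (2 * q) * K j
      = (1 - α) * (q.factorial : ℝ) ^ 2 * (-1) ^ (q + 1) := by
    rw [heven.sum_Icc_neg_self, Int.cast_zero, zero_pow (by omega), zero_mul, zero_add,
      sum_congr rfl fun j hj => by
        rw [Int.cast_natCast, hKj j (mem_Icc.mp hj).1 (mem_Icc.mp hj).2,
          pow_mul_factorial_div_sq_mul_prod_sq_sub_inv hj],
      ← mul_sum, Lagrange.sum_pow_card_sub_one_div_prod_sub hsq_inj ⟨1, by simp; omega⟩,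
      nsmul_eq_mul]
    ring
  refine ⟨hsum, fun hα => ?_⟩
  have : (1 : ℝ) - α ≠ 0 := sub_ne_zero.mpr hα.symm
  rw [hsum]
  positivity

/-- For `q ≥ 1`, `α ∈ ℝ`, `K 0 = α` and
`K j = K (−j) = ((1−α)/2)(q!/j)²/∏_{l≠j}(l² − j²)` for `j = 1, …, q`, one has
`∑_{j=−q}^q j^(2q) K j = (1−α)(q!)²(−1)^(q+1)`, which is nonzero whenever `α ≠ 1`. -/
theorem statement5 (q : ℕ) (hq : 1 ≤ q) (α : ℝ) (K : ℤ → ℝ)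
    (hK0 : K 0 = α)
    (hKsymm : ∀ j : ℤ, K (-j) = K j)
    (hKj : ∀ j : ℕ, 1 ≤ j → j ≤ q →
      K (j : ℤ) = ((1 - α) / 2) * ((q.factorial : ℝ) / j) ^ 2 *
        (∏ l ∈ (Finset.Icc 1 q).erase j, ((l : ℝ) ^ 2 - (j : ℝ) ^ 2))⁻¹) :
    (∑ j ∈ Finset.Icc (-(q : ℤ)) (q : ℤ), (j : ℝ) ^ (2 * q) * K j)
      = (1 - α) * (q.factorial : ℝ) ^ 2 * (-1 : ℝ) ^ (q + 1) ∧
    (α ≠ 1 → (∑ j ∈ Finset.Icc (-(q : ℤ)) (q : ℤ), (j : ℝ) ^ (2 * q) * K j) ≠ 0) :=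
  statement5_general q hq α K hKsymm hKj
end

section
/- Let K : ℝ → ℝ be a continuous, square-integrable function whose Fourier–Plancherel transform vanishes almost everywhere outside [−1/2, 1/2], and suppose that ∑_{j=1}^{∞} (|K(j)| + |K(−j)|)/j < ∞. Then for every u ∈ ℝ, the symmetric partial sums ∑_{j=−N}^{N} K(j) · sinc(π(u − j)) converge to K(u) as N → ∞; i.e., Shannon's sampling formula K(u) = ∑_{j=−∞}^{∞} K(j) sinc(π(u − j)) holds pointwise. -/
/-!
Since `G` vanishes off `[-1/2, 1/2]`, `K u = ⟪e_u, G⟫` in `L²(-1/2, 1/2]` with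
`e_u t = exp (2πitu)`. On the circle of period one, the Fourier coefficients of `G` are the samples
`K j`, and `⟪e_u, exp (2πij·)⟫ = sinc (π(u - j))`. Pairing `e_u` with the `L²`-convergent Fourier
series of `G` therefore yields the sampling series, even as an unconditionally convergent sum.
-/

open MeasureTheory Real Filter

/-- The sinc function: `sinc u = sin u / u` for `u ≠ 0` and `sinc 0 = 1`. -/
noncomputable def sinc (u : ℝ) : ℝ := if u = 0 then 1 else Real.sin u / u

open ComplexConjugate Set

theorem sinc_eq_real_sinc : _root_.sinc = Real.sinc := rfl

theorem AddCircle.hasSum_fourierCoeff_mul_integral_mul_conj {T : ℝ} [Fact (0 < T)]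
    {f g : AddCircle T → ℂ} (hf : MemLp f 2 haarAddCircle) (hg : MemLp g 2 haarAddCircle) :
    HasSum (fun n : ℤ => fourierCoeff f n * ∫ t, conj (g t) * fourier n t ∂haarAddCircle)
      (∫ t, f t * conj (g t) ∂haarAddCircle) := by
  have h := (innerSL ℂ (hg.toLp g)).hasSum (hasSum_fourier_series_L2 (hf.toLp f))
  simp only [innerSL_apply_apply, inner_smul_right, L2.inner_def, RCLike.inner_apply',
    fourierCoeff_congr_ae hf.coeFn_toLp] at h
  have h_basis (n : ℤ) : ∫ t, conj (hg.toLp g t) * fourierLp 2 n t ∂haarAddCircle =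
      ∫ t, conj (g t) * fourier n t ∂haarAddCircle :=
    integral_congr_ae <| by
      filter_upwards [hg.coeFn_toLp, coeFn_fourierLp 2 n] with t hgt hnt
      rw [hgt, hnt]
  have h_pair : ∫ t, conj (hg.toLp g t) * hf.toLp f t ∂haarAddCircle =
      ∫ t, f t * conj (g t) ∂haarAddCircle :=
    integral_congr_ae <| by
      filter_upwards [hg.coeFn_toLp, hf.coeFn_toLp] with t hgt hft
      rw [hgt, hft, mul_comm]
  rwa [h_pair, funext fun n => congrArg _ (h_basis n)] at h

theorem AddCircle.integral_eq_intervalIntegral_of_eqOn {T : ℝ} [hT : Fact (0 < T)]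
    {E : Type*} [NormedAddCommGroup E] [NormedSpace ℝ E] (a : ℝ) {F : AddCircle T → E}
    {φ : ℝ → E} (h : EqOn (fun x : ℝ => F x) φ (Ioc a (a + T))) :
    ∫ t, F t = ∫ x in a..a + T, φ x := by
  have hle : a ≤ a + T := le_add_of_nonneg_right hT.out.le
  rw [← AddCircle.intervalIntegral_preimage T a, intervalIntegral.integral_of_le hle,
    intervalIntegral.integral_of_le hle]
  exact setIntegral_congr_fun measurableSet_Ioc h

theorem hasSum_intervalIntegral_mul_intervalIntegral_conj {a b : ℝ} (hab : a < b) {f g : ℝ → ℂ}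
    (hf : MemLp f 2 (volume.restrict (Ioc a b))) (hg : MemLp g 2 (volume.restrict (Ioc a b))) :
    HasSum (fun n : ℤ =>
        ((b - a)⁻¹ • ∫ x in a..b, f x * Complex.exp (-(2 * π * Complex.I * x * n / (b - a : ℝ)))) *
        ((b - a)⁻¹ • ∫ x in a..b, conj (g x) * Complex.exp (2 * π * Complex.I * x * n / (b - a : ℝ))))
      ((b - a)⁻¹ • ∫ x in a..b, f x * conj (g x)) := by
  have := Fact.mk (sub_pos.2 hab)
  have hb : a + (b - a) = b := add_sub_cancel a b
  rw [← hb] at hf hg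
  have key := AddCircle.hasSum_fourierCoeff_mul_integral_mul_conj hf.memLp_liftIoc.haarAddCircle
    hg.memLp_liftIoc.haarAddCircle
  have h_coeff (n : ℤ) : ∫ t, fourier (-n) t • AddCircle.liftIoc (b - a) a f t =
      ∫ x in a..a + (b - a), f x * Complex.exp (-(2 * π * Complex.I * x * n / (b - a : ℝ))) :=
    AddCircle.integral_eq_intervalIntegral_of_eqOn a fun x hx => by
      simp only [AddCircle.liftIoc_coe_apply hx, fourier_coe_apply, smul_eq_mul]
      push_cast
      ring_nf
  have h_basis (n : ℤ) : ∫ t, conj (AddCircle.liftIoc (b - a) a g t) * fourier n t =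
      ∫ x in a..a + (b - a), conj (g x) * Complex.exp (2 * π * Complex.I * x * n / (b - a : ℝ)) :=
    AddCircle.integral_eq_intervalIntegral_of_eqOn a fun x hx => by
      simp only [AddCircle.liftIoc_coe_apply hx, fourier_coe_apply]
      ring_nf
  have h_pair : ∫ t, AddCircle.liftIoc (b - a) a f t * conj (AddCircle.liftIoc (b - a) a g t) =
      ∫ x in a..a + (b - a), f x * conj (g x) :=
    AddCircle.integral_eq_intervalIntegral_of_eqOn a fun x hx => by
      simp only [AddCircle.liftIoc_coe_apply hx]
  simpa only [fourierCoeff, AddCircle.integral_haarAddCircle, h_coeff, h_basis, h_pair, hb]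
    using key

theorem integral_eq_intervalIntegral_of_ae_eq_zero {E : Type*} [NormedAddCommGroup E]
    [NormedSpace ℝ E] {a b : ℝ} (hab : a ≤ b) {F : ℝ → E}
    (hF : ∀ᵐ x, x ∉ Icc a b → F x = 0) : ∫ x, F x = ∫ x in a..b, F x := by
  rw [intervalIntegral.integral_of_le hab, ← integral_Icc_eq_integral_Ioc,
    setIntegral_eq_integral_of_ae_compl_eq_zero hF]

theorem intervalIntegral_exp_mul_eq_sinc (a : ℝ) :
    ∫ x in (-(1/2) : ℝ)..(1/2), Complex.exp (2 * π * Complex.I * a * x) =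
      (Real.sinc (π * a) : ℂ) := by
  rcases eq_or_ne a 0 with rfl | ha
  · norm_num
  have hc : 2 * (π : ℂ) * Complex.I * a ≠ 0 := by simp [ha, pi_ne_zero]
  have hπa : (π : ℂ) * a ≠ 0 := by simp [ha, pi_ne_zero]
  rw [integral_exp_mul_complex hc, sinc_of_ne_zero (by positivity)]
  push_cast
  rw [Complex.sin, div_eq_div_iff hc hπa]
  ring_nf
  rw [Complex.I_sq]
  ring

theorem intervalIntegral_exp_neg_mul_exp_mul_eq_sinc (u v : ℝ) :
    ∫ t in (-(1/2) : ℝ)..(1/2), Complex.exp (-(2 * π * Complex.I * t * u)) *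
      Complex.exp (2 * π * Complex.I * t * v) = (Real.sinc (π * (u - v)) : ℂ) := by
  calc _ = ∫ t in (-(1/2) : ℝ)..(1/2), Complex.exp (2 * π * Complex.I * (v - u : ℝ) * t) := by
        congr! 2 with t
        rw [← Complex.exp_add]
        push_cast
        ring_nf
    _ = _ := by
        rw [intervalIntegral_exp_mul_eq_sinc, ← Real.sinc_neg]
        ring_nf

theorem statement8_general (K : ℝ → ℝ)
    (G : ℝ → ℂ) (hG2 : MemLp G 2 (volume : Measure ℝ))
    (hGsupp : ∀ᵐ t : ℝ, t ∉ Set.Icc (-(1/2) : ℝ) (1/2) → G t = 0)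
    (hGK : ∀ u : ℝ, (K u : ℂ) = ∫ t : ℝ, G t * Complex.exp (-(2 * π * Complex.I * t * u))) :
    ∀ u : ℝ,
      Tendsto (fun N : ℕ => ∑ j ∈ Finset.Icc (-(N : ℤ)) (N : ℤ),
          K (j : ℝ) * _root_.sinc (π * (u - (j : ℝ))))
        atTop (nhds (K u)) := by
  intro u
  have hK (v : ℝ) :
      ∫ t in (-(1/2) : ℝ)..(1/2), G t * Complex.exp (-(2 * π * Complex.I * t * v)) = K v := by
    rw [hGK v]
    refine (integral_eq_intervalIntegral_of_ae_eq_zero (by norm_num) ?_).symm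
    filter_upwards [hGsupp] with t hGt ht
    rw [hGt ht, zero_mul]
  have hexp : MemLp (fun t : ℝ => Complex.exp (2 * π * Complex.I * t * u)) 2
      (volume.restrict (Ioc (-(1/2)) (1/2))) :=
    .of_bound (by fun_prop : Continuous _).aestronglyMeasurable 1 <| .of_forall fun t => by
      simp [Complex.norm_exp]
  have hconj (t : ℝ) : conj (Complex.exp (2 * π * Complex.I * t * u)) =
      Complex.exp (-(2 * π * Complex.I * t * u)) := by
    rw [← Complex.exp_conj]
    simp [map_ofNat]
  have hS := hasSum_intervalIntegral_mul_intervalIntegral_conj (by norm_num) (hG2.restrict _) hexp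
  have hlen : (1/2 : ℝ) - -(1/2) = 1 := by norm_num
  simp only [hlen, inv_one, one_smul, Complex.ofReal_one, div_one, hconj, ← Complex.ofReal_intCast,
    hK, intervalIntegral_exp_neg_mul_exp_mul_eq_sinc] at hS
  have hS_real : HasSum (fun n : ℤ => K n * Real.sinc (π * (u - n))) (K u) := by
    exact_mod_cast hS
  rw [sinc_eq_real_sinc]
  exact hS_real.comp Finset.tendsto_Icc_neg

/-- **pointwise Shannon sampling formula.** Let `K : ℝ → ℝ` be continuous and
square-integrable, and suppose its Fourier–Plancherel transform vanishes a.e. outside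
`[−1/2, 1/2]`; i.e. (equivalently, with the convention `G t = ∫ K u e^(2πitu) du` extended to
`L²` by Plancherel) there is a square-integrable `G : ℝ → ℂ` vanishing a.e. outside
`[−1/2, 1/2]` with `K u = ∫ G t e^(−2πitu) dt` for all `u`. If moreover
`∑_{j=1}^∞ (|K j| + |K (−j)|)/j < ∞`, then for every `u ∈ ℝ` the symmetric partial sums
`∑_{j=−N}^N K j · sinc (π(u − j))` converge to `K u`. -/
theorem statement8 (K : ℝ → ℝ) (hKcont : Continuous K) (hK2 : MemLp K 2 (volume : Measure ℝ))
    (G : ℝ → ℂ) (hG2 : MemLp G 2 (volume : Measure ℝ))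
    (hGsupp : ∀ᵐ t : ℝ, t ∉ Set.Icc (-(1/2) : ℝ) (1/2) → G t = 0)
    (hGK : ∀ u : ℝ, (K u : ℂ) = ∫ t : ℝ, G t * Complex.exp (-(2 * π * Complex.I * t * u)))
    (hsum : Summable fun j : ℕ =>
      (|K ((j : ℝ) + 1)| + |K (-((j : ℝ) + 1))|) / ((j : ℝ) + 1)) :
    ∀ u : ℝ,
      Tendsto (fun N : ℕ => ∑ j ∈ Finset.Icc (-(N : ℤ)) (N : ℤ),
          K (j : ℝ) * _root_.sinc (π * (u - (j : ℝ))))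
        atTop (nhds (K u)) :=
  statement8_general K G hG2 hGsupp hGK
end

section
/- Let p ≥ 1 be an integer and let G : ℝ → ℝ be p times continuously differentiable with G(0) = 1, G^{(j)}(0) = 0 for j = 1, …, p−1, and sup_{x ∈ ℝ} |G^{(p)}(x)| < ∞. Let φ : ℝ → ℂ be measurable with |φ(t)| ≤ 1 for all t and ∫_{−∞}^{∞} t^{2p} |φ(t)|² dt < ∞. Then lim_{h → 0⁺} h^{−2p} ∫_{−∞}^{∞} (G(ht) − 1)² |φ(t)|² dt = (G^{(p)}(0)/p!)² ∫_{−∞}^{∞} t^{2p} |φ(t)|² dt. -/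
/-!
Taylor's theorem with Lagrange remainder shows that `q x := (G x - 1) / x ^ p` is bounded by
`sup |G⁽ᵖ⁾| / p!` and tends to `G⁽ᵖ⁾(0) / p!` as `x → 0`. Since
`h⁻²ᵖ (G(ht) - 1)² = q(ht)² t²ᵖ`, the claim follows by dominated convergence with the
integrable majorant `(sup |G⁽ᵖ⁾| / p!)² t²ᵖ |φ t|²`.
-/

open MeasureTheory Real Filter Set Topology

section FlatTaylor

variable {f : ℝ → ℝ} {p : ℕ} {x₀ : ℝ}

theorem taylorWithinEval_eq_of_iteratedDeriv_eq_zero {s : Set ℝ} (hf : ContDiffAt ℝ p f x₀)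
    (hs : UniqueDiffOn ℝ s) (hx₀ : x₀ ∈ s)
    (hflat : ∀ k, 0 < k → k ≤ p → iteratedDeriv k f x₀ = 0) (x : ℝ) :
    taylorWithinEval f p s x₀ x = f x₀ := by
  rw [taylor_within_apply, Finset.sum_eq_single_of_mem 0 (by simp)]
  · simp
  · intro k hk hk0
    have hkp : k ≤ p := Nat.lt_succ_iff.mp (Finset.mem_range.mp hk)
    rw [iteratedDerivWithin_eq_iteratedDeriv hs (hf.of_le (by exact_mod_cast hkp)) hx₀,
      hflat k (Nat.pos_of_ne_zero hk0) hkp, smul_zero]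

theorem exists_sub_eq_iteratedDeriv_mul_pow (hp : p ≠ 0) (hf : ContDiff ℝ p f)
    (hflat : ∀ k, 0 < k → k < p → iteratedDeriv k f x₀ = 0) {x : ℝ} (hx : x₀ ≠ x) :
    ∃ ξ ∈ uIoo x₀ x, f x - f x₀ = iteratedDeriv p f ξ * (x - x₀) ^ p / p.factorial := by
  obtain ⟨n, rfl⟩ := Nat.exists_eq_succ_of_ne_zero hp
  obtain ⟨ξ, hξ, hrem⟩ := taylor_mean_remainder_lagrange_iteratedDeriv hx hf.contDiffOn
  rw [taylorWithinEval_eq_of_iteratedDeriv_eq_zero (hf.contDiffAt.of_le (by simp))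
    (uniqueDiffOn_uIcc hx) left_mem_uIcc
    (fun k hk hkn => hflat k hk (Nat.lt_succ_of_le hkn))] at hrem
  exact ⟨ξ, hξ, hrem⟩

theorem abs_sub_div_pow_le (hp : p ≠ 0) (hf : ContDiff ℝ p f)
    (hflat : ∀ k, 0 < k → k < p → iteratedDeriv k f x₀ = 0) {M : ℝ}
    (hM : ∀ y, |iteratedDeriv p f y| ≤ M) (x : ℝ) :
    |(f x - f x₀) / (x - x₀) ^ p| ≤ M / p.factorial := by
  rcases eq_or_ne x₀ x with rfl | hx
  · simpa [hp] using div_nonneg ((abs_nonneg _).trans (hM x₀)) (Nat.cast_nonneg p.factorial)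
  obtain ⟨ξ, -, hξ⟩ := exists_sub_eq_iteratedDeriv_mul_pow hp hf hflat hx
  have hpow : (x - x₀) ^ p ≠ 0 := pow_ne_zero p (sub_ne_zero.mpr hx.symm)
  rw [hξ, mul_div_right_comm, mul_div_cancel_right₀ _ hpow, abs_div, Nat.abs_cast]
  gcongr
  exact hM ξ

theorem tendsto_sub_div_pow_nhdsNE (hp : p ≠ 0) (hf : ContDiff ℝ p f)
    (hflat : ∀ k, 0 < k → k < p → iteratedDeriv k f x₀ = 0) :
    Tendsto (fun x => (f x - f x₀) / (x - x₀) ^ p) (𝓝[≠] x₀)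
      (𝓝 (iteratedDeriv p f x₀ / p.factorial)) := by
  have hcont : ContinuousAt (fun y => iteratedDeriv p f y / p.factorial) x₀ :=
    ((hf.continuous_iteratedDeriv p le_rfl).div_const _).continuousAt
  rw [Metric.tendsto_nhdsWithin_nhds]
  intro ε hε
  obtain ⟨δ, hδ, hclose⟩ := Metric.continuousAt_iff.mp hcont ε hε
  refine ⟨δ, hδ, fun x hx hxδ => ?_⟩
  obtain ⟨ξ, hξ, hrem⟩ := exists_sub_eq_iteratedDeriv_mul_pow hp hf hflat (Ne.symm hx)
  have hpow : (x - x₀) ^ p ≠ 0 := pow_ne_zero p (sub_ne_zero.mpr hx)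
  rw [hrem, mul_div_right_comm, mul_div_cancel_right₀ _ hpow]
  refine hclose (lt_of_le_of_lt ?_ hxδ)
  rw [dist_comm ξ, dist_comm x]
  exact Real.dist_left_le_of_mem_uIcc (uIoo_subset_uIcc_self hξ)

end FlatTaylor

theorem tendsto_integral_comp_mul_mul_nhdsNE {q w : ℝ → ℝ} {C c : ℝ} (hq : Measurable q)
    (hqC : ∀ x, |q x| ≤ C) (hqc : Tendsto q (𝓝[≠] 0) (𝓝 c)) (hw : Integrable w) :
    Tendsto (fun h => ∫ t, q (h * t) * w t) (𝓝[≠] 0) (𝓝 (c * ∫ t, w t)) := by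
  rw [← integral_const_mul]
  refine tendsto_integral_filter_of_dominated_convergence (fun t => C * ‖w t‖)
    (Eventually.of_forall fun h =>
      ((hq.comp (measurable_const_mul h)).aestronglyMeasurable).mul hw.aestronglyMeasurable)
    (Eventually.of_forall fun h => ae_of_all _ fun t => ?_) (hw.norm.const_mul C) ?_
  · rw [norm_mul, Real.norm_eq_abs]
    exact mul_le_mul_of_nonneg_right (hqC _) (norm_nonneg _)
  filter_upwards [Measure.ae_ne volume 0] with t ht
  have hscale : Tendsto (fun h : ℝ => h * t) (𝓝[≠] 0) (𝓝[≠] 0) :=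
    tendsto_nhdsWithin_of_tendsto_nhds_of_eventually_within _
      (((continuous_mul_const t).tendsto' 0 0 (zero_mul t)).mono_left nhdsWithin_le_nhds)
      (eventually_nhdsWithin_of_forall fun h hh => mul_ne_zero hh ht)
  exact (hqc.comp hscale).mul_const (w t)

theorem statement11_general (p : ℕ) (hp : 1 ≤ p) (G : ℝ → ℝ)
    (hGsmooth : ContDiff ℝ p G) (hG0 : G 0 = 1)
    (hGj : ∀ j : ℕ, 1 ≤ j → j ≤ p - 1 → iteratedDeriv j G 0 = 0)
    (hGbd : ∃ M : ℝ, ∀ x : ℝ, |iteratedDeriv p G x| ≤ M)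
    (φ : ℝ → ℂ)
    (hφint : Integrable (fun t : ℝ => t ^ (2 * p) * ‖φ t‖ ^ 2)) :
    Tendsto
      (fun h : ℝ => (h ^ (2 * p))⁻¹ * ∫ t : ℝ, (G (h * t) - 1) ^ 2 * ‖φ t‖ ^ 2)
      (nhdsWithin 0 (Set.Ioi 0))
      (nhds ((iteratedDeriv p G 0 / (p.factorial : ℝ)) ^ 2 *
        ∫ t : ℝ, t ^ (2 * p) * ‖φ t‖ ^ 2)) := by
  obtain ⟨M, hM⟩ := hGbd
  have hp0 : p ≠ 0 := Nat.one_le_iff_ne_zero.mp hp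
  have hflat : ∀ k, 0 < k → k < p → iteratedDeriv k G 0 = 0 :=
    fun k hk hkp => hGj k hk (by omega)
  set q : ℝ → ℝ := fun x => ((G x - 1) / x ^ p) ^ 2
  have hq : Measurable q := by
    have := hGsmooth.continuous.measurable
    fun_prop
  have hqC : ∀ x, |q x| ≤ (M / p.factorial) ^ 2 := fun x => by
    simpa [q, hG0, abs_pow] using
      pow_le_pow_left₀ (abs_nonneg _) (abs_sub_div_pow_le hp0 hGsmooth hflat hM x) 2
  have hqc : Tendsto q (𝓝[≠] 0) (𝓝 ((iteratedDeriv p G 0 / p.factorial) ^ 2)) := by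
    simpa [q, hG0] using (tendsto_sub_div_pow_nhdsNE hp0 hGsmooth hflat).pow 2
  refine ((tendsto_integral_comp_mul_mul_nhdsNE hq hqC hqc hφint).mono_left
    (nhdsWithin_mono _ fun h hh => ne_of_gt hh)).congr' ?_
  filter_upwards [self_mem_nhdsWithin] with h (hh : 0 < h)
  rw [← integral_const_mul]
  refine integral_congr_ae ?_
  filter_upwards [Measure.ae_ne volume 0] with t ht
  simp only [q]
  field_simp
  ring

/-- Let `p ≥ 1`, let `G : ℝ → ℝ` be `p` times continuously differentiable
with `G 0 = 1`, `G⁽ʲ⁾(0) = 0` for `j = 1, …, p−1`, and `sup_x |G⁽ᵖ⁾(x)| < ∞`. Let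
`φ : ℝ → ℂ` be measurable with `|φ t| ≤ 1` and `∫ t^(2p) |φ t|² dt < ∞`. Then
`h^(−2p) ∫ (G(ht) − 1)² |φ t|² dt → (G⁽ᵖ⁾(0)/p!)² ∫ t^(2p) |φ t|² dt` as `h → 0⁺`. -/
theorem statement11 (p : ℕ) (hp : 1 ≤ p) (G : ℝ → ℝ)
    (hGsmooth : ContDiff ℝ p G) (hG0 : G 0 = 1)
    (hGj : ∀ j : ℕ, 1 ≤ j → j ≤ p - 1 → iteratedDeriv j G 0 = 0)
    (hGbd : ∃ M : ℝ, ∀ x : ℝ, |iteratedDeriv p G x| ≤ M)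
    (φ : ℝ → ℂ) (hφmeas : Measurable φ) (hφbd : ∀ t, ‖φ t‖ ≤ 1)
    (hφint : Integrable (fun t : ℝ => t ^ (2 * p) * ‖φ t‖ ^ 2)) :
    Tendsto
      (fun h : ℝ => (h ^ (2 * p))⁻¹ * ∫ t : ℝ, (G (h * t) - 1) ^ 2 * ‖φ t‖ ^ 2)
      (nhdsWithin 0 (Set.Ioi 0))
      (nhds ((iteratedDeriv p G 0 / (p.factorial : ℝ)) ^ 2 *
        ∫ t : ℝ, t ^ (2 * p) * ‖φ t‖ ^ 2)) :=
  statement11_general p hp G hGsmooth hG0 hGj hGbd φ hφint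
end
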